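/- arXiv:1401.2268 — 3 statements merged into one kernel-verified Lean document; each statement's English description precedes it below -/
import Mathlib

section
/- Let K be a field complete with respect to a nontrivial non-Archimedean absolute value, and let S be a finite set of vectors of norm 1 in a non-Archimedean normed K-vector space whose reductions (images in the quotient of the closed unit ball by the open unit ball, viewed as a vector space over the residue field) are linearly independent. Then S is orthonormal, i.e., for all scalars c_s ∈ K, ‖∑_{s∈S} c_s • s‖ = max_{s∈S} |c_s|. -/
/-- Over a complete nontrivially non-Archimedean valued field `K`,
a finite family of vectors of norm `1` in a non-Archimedean normed `K`-vector space
whose reductions (modulo the open unit ball, over the residue field `O/m`) are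
linearly independent is orthonormal: `‖∑ cᵢ • vᵢ‖ = max |cᵢ|`.

Linear independence of the reductions is expressed in lifted form: every lift
`c : ι → K` of residue coefficients with `|cᵢ| ≤ 1` whose combination reduces to `0`
(i.e. `‖∑ cᵢ • vᵢ‖ < 1`) has all residues zero (i.e. `|cᵢ| < 1`); this is exactly
linear independence in `E₁/E₀` over `𝕜 = O/m` since `O → 𝕜` and the reduction maps
are surjective. -/
theorem orthonormal_of_linearIndependent_reductions
    {K : Type*} [NontriviallyNormedField K] [CompleteSpace K] [IsUltrametricDist K]
    {E : Type*} [NormedAddCommGroup E] [NormedSpace K E] [IsUltrametricDist E]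
    {ι : Type*} [Fintype ι] (v : ι → E)
    (hnorm : ∀ i, ‖v i‖ = 1)
    (hli : ∀ c : ι → K, (∀ i, ‖c i‖ ≤ 1) → ‖∑ i, c i • v i‖ < 1 → ∀ i, ‖c i‖ < 1) :
    ∀ c : ι → K, ‖∑ i, c i • v i‖ = ⨆ i, ‖c i‖ := by
  intro c
  rcases isEmpty_or_nonempty ι with h | h
  · simp [ciSup_of_empty]
  obtain ⟨j, hj⟩ := Finite.exists_max (fun i => ‖c i‖)
  have hsup : (⨆ i, ‖c i‖) = ‖c j‖ :=
    le_antisymm (ciSup_le hj) (le_ciSup (f := fun i => ‖c i‖) (Set.Finite.bddAbove (Set.finite_range _)) j)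
  rw [hsup]
  refine le_antisymm ?_ ?_
  · apply IsUltrametricDist.norm_sum_le_of_forall_le_of_nonneg (norm_nonneg _)
    intro i _
    rw [norm_smul, hnorm, mul_one]
    exact hj i
  · rcases eq_or_ne (c j) 0 with hc0 | hc0
    · have hz : ∀ i, c i = 0 := fun i =>
        norm_le_zero_iff.mp (by simpa [hc0] using hj i)
      simp [hz]
    have hcj : (0:ℝ) < ‖c j‖ := norm_pos_iff.mpr hc0
    have hd : ∀ i, ‖c i / c j‖ ≤ 1 := fun i => by
      rw [norm_div, div_le_one hcj]; exact hj i
    have heq : ∑ i, (c i / c j) • v i = (c j)⁻¹ • ∑ i, c i • v i := by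
      rw [Finset.smul_sum]
      exact Finset.sum_congr rfl fun i _ => by rw [smul_smul, div_eq_inv_mul]
    have key : (1:ℝ) ≤ ‖∑ i, (c i / c j) • v i‖ := by
      by_contra hlt
      push_neg at hlt
      have := hli _ hd hlt j
      simp [norm_div, div_self (norm_ne_zero_iff.mpr hc0)] at this
    rw [heq, norm_smul, norm_inv] at key
    calc ‖c j‖ = ‖c j‖ * 1 := (mul_one _).symm
      _ ≤ ‖c j‖ * (‖c j‖⁻¹ * ‖∑ i, c i • v i‖) := by
          exact mul_le_mul_of_nonneg_left key hcj.le
      _ = ‖∑ i, c i • v i‖ := by field_simp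
end

section
/- Let G be a group and let ℳ denote the set of bounded operators on c₀(G,K) of the form A_η with matrix (A_η)_{a,b} = η_{a⁻¹b} for η ∈ c₀(G,K). Then the map η ↦ A_η is an isometric K-linear bijection from c₀(G,K) onto ℳ, and the composition A_η ∘ A_ζ equals A_θ where θ_d = ∑_{l∈G} η_l ζ_{l⁻¹ d} (a convergent sum in K). -/
set_option linter.unusedSectionVars false

open ZeroAtInfty Filter

noncomputable section

variable {J : Type*} [TopologicalSpace J] [DiscreteTopology J]
variable {K : Type*} [NontriviallyNormedField K]

/-- The standard basis vector `δ_j` in `c₀(J, K)` (the indicator function of `j`). -/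
def delta (j : J) : C₀(J, K) :=
  letI := Classical.decEq J
  ⟨⟨fun i => if i = j then (1 : K) else 0, continuous_of_discreteTopology⟩, by
    refine Tendsto.congr' ?_ tendsto_const_nhds
    rw [cocompact_eq_cofinite]
    filter_upwards [(Set.finite_singleton j).compl_mem_cofinite] with i hi
    simp only [Set.mem_compl_iff, Set.mem_singleton_iff] at hi
    simp [hi]⟩

lemma c0_norm_apply_le (x : C₀(J, K)) (i : J) : ‖x i‖ ≤ ‖x‖ := by
  rw [← ZeroAtInftyContinuousMap.norm_toBCF_eq_norm]
  exact x.toBCF.norm_coe_le_norm i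

lemma c0_norm_le_of_forall {x : C₀(J, K)} {C : ℝ} (hC : 0 ≤ C) (h : ∀ i, ‖x i‖ ≤ C) :
    ‖x‖ ≤ C := by
  rw [← ZeroAtInftyContinuousMap.norm_toBCF_eq_norm]
  exact (BoundedContinuousFunction.norm_le hC).2 h

/-- Precomposition with a bijection of the (discrete) index set, as a continuous
linear operator on `c₀(J, K)`. -/
def precompCLM (σ : J ≃ J) : C₀(J, K) →L[K] C₀(J, K) :=
  LinearMap.mkContinuous
    (ZeroAtInftyContinuousMap.compLinearMap
      (⟨⟨σ, continuous_of_discreteTopology⟩, by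
          simpa [cocompact_eq_cofinite] using σ.injective.tendsto_cofinite⟩ : CocompactMap J J))
    1
    (fun f => by
      rw [one_mul]
      exact c0_norm_le_of_forall (norm_nonneg f) fun i => c0_norm_apply_le f (σ i))

@[simp] lemma precompCLM_apply (σ : J ≃ J) (f : C₀(J, K)) (i : J) :
    precompCLM σ f i = f (σ i) := rfl

variable {G : Type*} [Group G] [TopologicalSpace G] [DiscreteTopology G]

/-- The right regular representation: `(U_g x)_a = x_{a g}`. -/
def U (g : G) : C₀(G, K) →L[K] C₀(G, K) := precompCLM (Equiv.mulRight g)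

/-- The left regular representation: `(V_g x)_a = x_{g⁻¹ a}`. -/
def V (g : G) : C₀(G, K) →L[K] C₀(G, K) := precompCLM (Equiv.mulLeft g⁻¹)

/-- The flip operator `(W x)_a = x_{a⁻¹}`. -/
def Wop : C₀(G, K) →L[K] C₀(G, K) := precompCLM (Equiv.inv G)

end

/-! The operator with matrix `η (a⁻¹ * b)` is the series `∑ l, η l • U l` of right translations.
Since `‖U l‖ ≤ 1`, `η l → 0` and the norm is non-Archimedean, the series converges in operator
norm, and evaluating it gives `(A x) a = ∑ l, η l * x (a * l)`; the ultrametric inequality for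
this sum gives `‖A‖ ≤ ‖η‖`, while `(A (delta 1)) a = η a⁻¹` gives the reverse bound. The finite
combinations of the `delta b` are dense in `c₀`, so this is the only operator with the given
matrix, and the evaluation formula at `x = B (delta b)` is the convolution.
-/

noncomputable section

open Topology

section Discrete

variable {J : Type*} [TopologicalSpace J] [DiscreteTopology J]
variable {K : Type*} [NontriviallyNormedField K]

def c0EvalCLM (a : J) : C₀(J, K) →L[K] K :=
  LinearMap.mkContinuous
    { toFun := fun x => x a, map_add' := fun _ _ => rfl, map_smul' := fun _ _ => rfl } 1
    (fun x => by simpa using c0_norm_apply_le x a)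

@[simp] lemma c0EvalCLM_apply (a : J) (x : C₀(J, K)) : c0EvalCLM a x = x a := rfl

lemma c0_norm_eq_iSup (x : C₀(J, K)) : ‖x‖ = ⨆ i, ‖x i‖ := by
  rw [← ZeroAtInftyContinuousMap.norm_toBCF_eq_norm, BoundedContinuousFunction.norm_eq_iSup_norm]
  rfl

lemma c0_finite_setOf_le_norm (x : C₀(J, K)) {ε : ℝ} (hε : 0 < ε) :
    {j | ε ≤ ‖x j‖}.Finite := by
  have hx : Tendsto (fun j => ‖x j‖) cofinite (𝓝 0) := by
    simpa [cocompact_eq_cofinite] using x.zero_at_infty'.norm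
  simpa using Filter.eventually_cofinite.mp (hx.eventually (gt_mem_nhds hε))

lemma delta_apply [DecidableEq J] (j i : J) :
    (delta j : C₀(J, K)) i = if i = j then 1 else 0 := by
  simp [delta]

lemma norm_delta_le_one (j : J) : ‖(delta j : C₀(J, K))‖ ≤ 1 := by
  refine c0_norm_le_of_forall zero_le_one fun i => ?_
  classical
  rw [delta_apply]
  split_ifs <;> simp

lemma sum_smul_delta_apply [DecidableEq J] (x : C₀(J, K)) (s : Finset J) (i : J) :
    (∑ j ∈ s, x j • delta j) i = if i ∈ s then x i else 0 := by
  rw [← c0EvalCLM_apply, map_sum]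
  simp [delta_apply]

lemma hasSum_smul_delta (x : C₀(J, K)) : HasSum (fun j => x j • delta j) x := by
  classical
  rw [HasSum, SummationFilter.unconditional_filter, Metric.tendsto_atTop]
  intro ε hε
  refine ⟨(c0_finite_setOf_le_norm x (half_pos hε)).toFinset, fun s hs => ?_⟩
  rw [dist_eq_norm]
  refine (c0_norm_le_of_forall (half_pos hε).le fun i => ?_).trans_lt (half_lt_self hε)
  rw [ZeroAtInftyContinuousMap.sub_apply, sum_smul_delta_apply]
  by_cases hi : i ∈ s
  · simpa [hi] using (half_pos hε).le
  · have : ‖x i‖ < ε / 2 := by simpa using fun h => hi (hs h)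
    simpa [hi] using this.le

theorem ContinuousLinearMap.ext_delta {E : Type*} [NormedAddCommGroup E] [NormedSpace K E]
    {A B : C₀(J, K) →L[K] E} (h : ∀ j, A (delta j) = B (delta j)) : A = B := by
  ext x
  have hA := (hasSum_smul_delta x).mapL A
  have hB := (hasSum_smul_delta x).mapL B
  simp only [map_smul, h] at hA hB
  exact hA.unique hB

end Discrete

section Group

variable {K : Type*} [NontriviallyNormedField K]
variable {G : Type*} [Group G] [TopologicalSpace G] [DiscreteTopology G]

def HasMatrix (A : C₀(G, K) →L[K] C₀(G, K)) (η : C₀(G, K)) : Prop :=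
  ∀ a b : G, A (delta b) a = η (a⁻¹ * b)

lemma HasMatrix.norm_le_opNorm {A : C₀(G, K) →L[K] C₀(G, K)} {η : C₀(G, K)}
    (hA : HasMatrix A η) : ‖η‖ ≤ ‖A‖ := by
  refine c0_norm_le_of_forall (norm_nonneg A) fun g => ?_
  calc ‖η g‖ = ‖A (delta 1) g⁻¹‖ := by rw [hA, inv_inv, mul_one]
    _ ≤ ‖A (delta 1)‖ := c0_norm_apply_le _ _
    _ ≤ ‖A‖ * ‖(delta 1 : C₀(G, K))‖ := A.le_opNorm _
    _ ≤ ‖A‖ := mul_le_of_le_one_right (norm_nonneg A) (norm_delta_le_one 1)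

lemma norm_sum_smul_U_le [IsUltrametricDist K] (c : G → K) (t : Finset G) {C : ℝ} (hC : 0 ≤ C)
    (h : ∀ l ∈ t, ‖c l‖ ≤ C) : ‖∑ l ∈ t, c l • (U l : C₀(G, K) →L[K] C₀(G, K))‖ ≤ C := by
  refine ContinuousLinearMap.opNorm_le_bound _ hC fun x => ?_
  refine c0_norm_le_of_forall (by positivity) fun a => ?_
  rw [sum_apply, ← c0EvalCLM_apply, map_sum]
  refine IsUltrametricDist.norm_sum_le_of_forall_le_of_nonneg (by positivity) fun l hl => ?_
  rw [c0EvalCLM_apply, smul_apply, ZeroAtInftyContinuousMap.smul_apply, norm_smul]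
  exact mul_le_mul (h l hl) (c0_norm_apply_le x _) (norm_nonneg _) hC

variable [CompleteSpace K] [IsUltrametricDist K]

lemma summable_smul_U (η : C₀(G, K)) :
    Summable fun l => η l • (U l : C₀(G, K) →L[K] C₀(G, K)) := by
  refine (summable_iff_vanishing_norm (E := C₀(G, K) →L[K] C₀(G, K))).2 fun ε hε => ?_
  refine ⟨(c0_finite_setOf_le_norm η (half_pos hε)).toFinset, fun t ht => ?_⟩
  refine (norm_sum_smul_U_le _ t (half_pos hε).le fun l hl => ?_).trans_lt (half_lt_self hε)
  have : ‖η l‖ < ε / 2 := by simpa using Finset.disjoint_left.1 ht hl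
  exact this.le

/-- `A_η = ∑ l, η l • U l`, since `(U l (delta b)) a = 1` exactly when `l = a⁻¹ * b`. -/
def convOp (η : C₀(G, K)) : C₀(G, K) →L[K] C₀(G, K) := ∑' l, η l • U l

lemma hasSum_convOp_apply (η x : C₀(G, K)) (a : G) :
    HasSum (fun l => η l * x (a * l)) (convOp η x a) :=
  ((summable_smul_U η).hasSum.mapL (ContinuousLinearMap.apply K _ x)).mapL (c0EvalCLM a)

lemma hasMatrix_convOp (η : C₀(G, K)) : HasMatrix (convOp η) η := by
  classical
  intro a b
  refine (hasSum_convOp_apply η (delta b) a).unique ?_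
  convert hasSum_ite_eq (a⁻¹ * b) (η (a⁻¹ * b)) using 2 with l
  rw [delta_apply, ← eq_inv_mul_iff_mul_eq]
  split_ifs with h
  · rw [h, mul_one]
  · rw [mul_zero]

lemma HasMatrix.eq_convOp {A : C₀(G, K) →L[K] C₀(G, K)} {η : C₀(G, K)} (hA : HasMatrix A η) :
    A = convOp η :=
  ContinuousLinearMap.ext_delta fun b => by ext a; rw [hA, hasMatrix_convOp]

lemma HasMatrix.hasSum_apply {A : C₀(G, K) →L[K] C₀(G, K)} {η : C₀(G, K)} (hA : HasMatrix A η)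
    (x : C₀(G, K)) (a : G) : HasSum (fun l => η l * x (a * l)) (A x a) :=
  hA.eq_convOp ▸ hasSum_convOp_apply η x a

lemma HasMatrix.opNorm_le {A : C₀(G, K) →L[K] C₀(G, K)} {η : C₀(G, K)} (hA : HasMatrix A η) :
    ‖A‖ ≤ ‖η‖ := by
  refine ContinuousLinearMap.opNorm_le_bound _ (norm_nonneg η) fun x => ?_
  refine c0_norm_le_of_forall (by positivity) fun a => ?_
  rw [← (hA.hasSum_apply x a).tsum_eq]
  refine IsUltrametricDist.norm_tsum_le_of_forall_le_of_nonneg (by positivity) fun l => ?_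
  rw [norm_mul]
  exact mul_le_mul (c0_norm_apply_le η l) (c0_norm_apply_le x _) (norm_nonneg _) (norm_nonneg _)

lemma HasMatrix.opNorm_eq {A : C₀(G, K) →L[K] C₀(G, K)} {η : C₀(G, K)} (hA : HasMatrix A η) :
    ‖A‖ = ‖η‖ :=
  le_antisymm hA.opNorm_le hA.norm_le_opNorm

end Group

end

open ZeroAtInfty Filter

/-- For `η ∈ c₀(G, K)` there is a unique bounded operator `A_η` on
`c₀(G, K)` with matrix `(A_η)_{a,b} = η_{a⁻¹ b}`; the correspondence `η ↦ A_η` is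
isometric (`‖A_η‖ = ‖η‖ = sup_g |η_g|`, and it is `K`-linear since the matrix depends
linearly on `η`), and composition corresponds to convolution:
`(A_η ∘ A_ζ)` has matrix `θ_{a⁻¹b}` with `θ_d = ∑_l η_l ζ_{l⁻¹ d}`, a convergent sum. -/
theorem matrix_operators_convolution
    {K : Type*} [NontriviallyNormedField K] [CompleteSpace K] [IsUltrametricDist K]
    {G : Type*} [Group G] [TopologicalSpace G] [DiscreteTopology G] :
    (∀ η : C₀(G, K), ∃! A : C₀(G, K) →L[K] C₀(G, K),
        ∀ a b : G, A (delta b) a = η (a⁻¹ * b)) ∧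
    (∀ (η : C₀(G, K)) (A : C₀(G, K) →L[K] C₀(G, K)),
        (∀ a b : G, A (delta b) a = η (a⁻¹ * b)) → ‖A‖ = ⨆ g : G, ‖η g‖) ∧
    (∀ (η ζ : C₀(G, K)) (A B : C₀(G, K) →L[K] C₀(G, K)),
        (∀ a b : G, A (delta b) a = η (a⁻¹ * b)) →
        (∀ a b : G, B (delta b) a = ζ (a⁻¹ * b)) →
        ∀ a b : G, HasSum (fun l : G => η l * ζ (l⁻¹ * (a⁻¹ * b))) ((A.comp B) (delta b) a)) := by
  refine ⟨fun η => ⟨convOp η, hasMatrix_convOp η, fun A hA => HasMatrix.eq_convOp hA⟩,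
    fun η A hA => ?_, fun η ζ A B hA hB a b => ?_⟩
  · rw [← c0_norm_eq_iSup]
    exact HasMatrix.opNorm_eq hA
  · simpa only [ContinuousLinearMap.comp_apply, hB _ b, mul_inv_rev, mul_assoc] using
      HasMatrix.hasSum_apply hA (B (delta b)) a
end

section
/- Let G be a group having a nontrivial element a₀ with finite conjugacy class C = {c⁻¹a₀c : c ∈ G}. Then the operator A = ∑_{d∈C} U_d on c₀(G,K) commutes with all U_g and all V_g (g ∈ G) but is not a scalar multiple of the identity. In particular, the algebra generated by the right regular representation has nontrivial center. -/
set_option linter.unusedSectionVars false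

open ZeroAtInfty Filter

/-! Conjugation by `g` permutes the conjugacy class `C`, so it permutes the terms of
`A = ∑_{d ∈ C} U_d`; and every `U_d` commutes with every `V_g`, right and left translations
commuting. Finally `A δ₁` is the indicator of `C⁻¹`, which contains `a₀⁻¹ ≠ 1` where `δ₁`
vanishes, so `A` is not a scalar. -/

instance {α β : Type*} [TopologicalSpace α] [TopologicalSpace β] [Zero β] :
    IsZeroApply C₀(α, β) α β :=
  ⟨fun _ => rfl⟩

instance {α β : Type*} [TopologicalSpace α] [TopologicalSpace β] [AddZeroClass β]
    [ContinuousAdd β] :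
    IsAddApply C₀(α, β) α β :=
  ⟨fun _ _ _ => rfl⟩

section RegularRepresentation

variable {K : Type*} [NontriviallyNormedField K]

theorem delta_apply_self {J : Type*} [TopologicalSpace J] [DiscreteTopology J] (j : J) :
    (delta j : C₀(J, K)) j = 1 :=
  if_pos rfl

theorem delta_apply_of_ne {J : Type*} [TopologicalSpace J] [DiscreteTopology J] {i j : J}
    (h : i ≠ j) : (delta j : C₀(J, K)) i = 0 :=
  if_neg h

variable {G : Type*} [Group G] [TopologicalSpace G] [DiscreteTopology G]

@[simp] theorem U_apply (g : G) (x : C₀(G, K)) (a : G) : U g x a = x (a * g) := rfl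

@[simp] theorem V_apply (g : G) (x : C₀(G, K)) (a : G) : V g x a = x (g⁻¹ * a) := rfl

theorem U_comp_U (g h : G) : (U g : C₀(G, K) →L[K] C₀(G, K)).comp (U h) = U (g * h) := by
  ext x a
  simp [mul_assoc]

theorem U_comp_V (g h : G) :
    (U g : C₀(G, K) →L[K] C₀(G, K)).comp (V h) = (V h).comp (U g) := by
  ext x a
  simp [mul_assoc]

theorem sum_U_comp_U_of_conj_mem {s : Finset G} (hs : ∀ c, ∀ d ∈ s, c⁻¹ * d * c ∈ s) (g : G) :
    (∑ d ∈ s, (U d : C₀(G, K) →L[K] C₀(G, K))).comp (U g) = (U g).comp (∑ d ∈ s, U d) := by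
  rw [ContinuousLinearMap.finsetSum_comp, ContinuousLinearMap.comp_finsetSum]
  simp only [U_comp_U]
  refine Finset.sum_nbij' (fun d => g⁻¹ * d * g) (fun d => g * d * g⁻¹) (fun d hd => hs g d hd)
    (fun d hd => by simpa using hs g⁻¹ d hd) (fun d _ => by group) (fun d _ => by group)
    (fun d _ => by group)

theorem sum_U_comp_V (s : Finset G) (g : G) :
    (∑ d ∈ s, (U d : C₀(G, K) →L[K] C₀(G, K))).comp (V g) = (V g).comp (∑ d ∈ s, U d) := by
  rw [ContinuousLinearMap.finsetSum_comp, ContinuousLinearMap.comp_finsetSum]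
  exact Finset.sum_congr rfl fun d _ => U_comp_V d g

theorem sum_U_delta_one_apply_inv [DecidableEq G] (s : Finset G) (a : G) :
    (∑ d ∈ s, (U d : C₀(G, K) →L[K] C₀(G, K))) (delta 1) a⁻¹ = if a ∈ s then 1 else 0 := by
  have h_term : ∀ d : G, U d (delta 1 : C₀(G, K)) a⁻¹ = if a = d then 1 else 0 := by
    intro d
    split_ifs with had
    · simp [had, delta_apply_self]
    · rw [U_apply]
      exact delta_apply_of_ne (by rwa [Ne, inv_mul_eq_one])
  rw [sum_apply, sum_apply]
  simp only [h_term, Finset.sum_ite_eq]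

theorem sum_U_ne_smul_id {s : Finset G} {a : G} (ha : a ≠ 1) (has : a ∈ s) (c : K) :
    ∑ d ∈ s, (U d : C₀(G, K) →L[K] C₀(G, K)) ≠ c • ContinuousLinearMap.id K (C₀(G, K)) := by
  classical
  intro h_eq
  have h_sum := sum_U_delta_one_apply_inv (K := K) s a
  rw [h_eq, if_pos has, smul_apply, ContinuousLinearMap.id_apply,
    ZeroAtInftyContinuousMap.smul_apply, delta_apply_of_ne (inv_ne_one.mpr ha), smul_zero] at h_sum
  exact zero_ne_one h_sum

end RegularRepresentation

/-- If `G` has a nontrivial element `a₀` with finite conjugacy class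
`C`, then the finite sum `A = ∑_{d ∈ C} U_d` commutes with all `U_g` and all `V_g`
but is not a scalar multiple of the identity (so the algebra generated by the right
regular representation has nontrivial center). -/
theorem finite_class_gives_central_element
    {K : Type*} [NontriviallyNormedField K]
    {G : Type*} [Group G] [TopologicalSpace G] [DiscreteTopology G]
    (a₀ : G) (ha₀ : a₀ ≠ 1)
    (hC : {x : G | ∃ c : G, x = c⁻¹ * a₀ * c}.Finite) :
    (∀ g : G, (∑ d ∈ hC.toFinset, (U d : C₀(G, K) →L[K] C₀(G, K))).comp (U g) =
        (U g).comp (∑ d ∈ hC.toFinset, U d)) ∧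
    (∀ g : G, (∑ d ∈ hC.toFinset, (U d : C₀(G, K) →L[K] C₀(G, K))).comp (V g) =
        (V g).comp (∑ d ∈ hC.toFinset, U d)) ∧
    ¬ ∃ c : K, (∑ d ∈ hC.toFinset, (U d : C₀(G, K) →L[K] C₀(G, K))) =
        c • ContinuousLinearMap.id K (C₀(G, K)) := by
  have h_mem : ∀ x, x ∈ hC.toFinset ↔ ∃ c : G, x = c⁻¹ * a₀ * c := fun x => hC.mem_toFinset
  have h_conj : ∀ c, ∀ d ∈ hC.toFinset, c⁻¹ * d * c ∈ hC.toFinset := by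
    intro c d hd
    obtain ⟨b, rfl⟩ := (h_mem d).1 hd
    exact (h_mem _).2 ⟨b * c, by group⟩
  have h_self : a₀ ∈ hC.toFinset := (h_mem a₀).2 ⟨1, by group⟩
  exact ⟨sum_U_comp_U_of_conj_mem h_conj, sum_U_comp_V _, fun ⟨c, hc⟩ =>
    sum_U_ne_smul_id ha₀ h_self c hc⟩
end
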